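/- Let k_1 ≥ k_2 ≥ k_m ≥ 3 be integers with at most one of k_1, k_2, k_m odd, and let n_1 ≥ k_1 + k_m and n_2 ≥ k_2. Then [n_1, k_1+k_m] + [n_2, k_2+k_m, k_m] < [n_1+n_2, k_1+k_2+k_m]. -/

import Mathlib

open SimpleGraph Finset

/-- The quantity `[n,m,l]` from the paper: if `n ≤ m-1` it is `C(n,2)`; otherwise, writing
`n = (m-1) + t(l-1) + r` with `0 ≤ r < l-1`, it is `C(m-1,2) + t·C(l-1,2) + C(r,2)`. -/
def brkt3 (n m l : ℕ) : ℕ :=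
  if n ≤ m - 1 then Nat.choose n 2
  else Nat.choose (m - 1) 2 + ((n - (m - 1)) / (l - 1)) * Nat.choose (l - 1) 2
      + Nat.choose ((n - (m - 1)) % (l - 1)) 2

/-- The quantity `[n,m]` from the paper: `C(⌊m/2⌋-1,2) + ⌊(m-2)/2⌋·(n - ⌊m/2⌋ + 1)`. -/
def brkt2 (n m : ℕ) : ℕ :=
  Nat.choose (m / 2 - 1) 2 + ((m - 2) / 2) * (n - m / 2 + 1)

/-- The disjoint union of paths `P_{k 0} ∪ … ∪ P_{k (m-1)}`. -/
def pathUnion (m : ℕ) (k : Fin m → ℕ) : SimpleGraph (Σ i : Fin m, Fin (k i)) where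
  Adj x y := x.1 = y.1 ∧ ((x.2 : ℕ) + 1 = (y.2 : ℕ) ∨ (y.2 : ℕ) + 1 = (x.2 : ℕ))
  symm := ⟨by rintro x y ⟨h1, h2⟩; exact ⟨h1.symm, h2.symm⟩⟩
  loopless := ⟨by rintro x ⟨-, h⟩; omega⟩

/-- `G` contains a copy of `H` as a subgraph. -/
def ContainsSub {V W : Type*} (G : SimpleGraph V) (H : SimpleGraph W) : Prop :=
  ∃ f : W ↪ V, ∀ a b, H.Adj a b → G.Adj (f a) (f b)

/-- The Turán number `ex(n,H)`: the maximum number of edges of a simple graph on `n`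
vertices containing no subgraph isomorphic to `H`. -/
noncomputable def exNum (n : ℕ) {W : Type*} (H : SimpleGraph W) : ℕ :=
  sSup {e : ℕ | ∃ G : SimpleGraph (Fin n), ¬ ContainsSub G H ∧ G.edgeSet.ncard = e}

/-- The connected Turán number `ex_con(n,H)`: the maximum number of edges of a connected
simple graph on `n` vertices containing no subgraph isomorphic to `H`. -/
noncomputable def exConNum (n : ℕ) {W : Type*} (H : SimpleGraph W) : ℕ :=
  sSup {e : ℕ | ∃ G : SimpleGraph (Fin n),
    G.Connected ∧ ¬ ContainsSub G H ∧ G.edgeSet.ncard = e}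

/-- The graph `K_m ∪ M_{n-m}` on `Fin n`: a complete graph on the first `m` vertices
together with a maximum matching on the remaining `n - m` vertices. -/
def compPlusMatching (n m : ℕ) : SimpleGraph (Fin n) where
  Adj a b := a ≠ b ∧
    (((a : ℕ) < m ∧ (b : ℕ) < m) ∨
     (m ≤ (a : ℕ) ∧ m ≤ (b : ℕ) ∧ ((a : ℕ) - m) / 2 = ((b : ℕ) - m) / 2))
  symm := ⟨by rintro a b ⟨h1, h2⟩; exact ⟨h1.symm, by tauto⟩⟩
  loopless := ⟨by rintro a ⟨h, -⟩; exact h rfl⟩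

/-- The graph `K_l + (K_2 ∪ K̄_{n-l-2})` on `Fin n`. -/
def joinK2Empty (n l : ℕ) : SimpleGraph (Fin n) where
  Adj a b := a ≠ b ∧ ((a : ℕ) < l ∨ (b : ℕ) < l ∨ ((a : ℕ) < l + 2 ∧ (b : ℕ) < l + 2))
  symm := ⟨by rintro a b ⟨h1, h2⟩; exact ⟨h1.symm, by tauto⟩⟩
  loopless := ⟨by rintro a ⟨h, -⟩; exact h rfl⟩

/-!
Doubling clears the binomial coefficients. With `s = ⌊m/2⌋` one has `2·[n,m] = (s-1)(2n-s)`,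
and with `p = min n (m-1)` one has `2·[n,m,l] ≤ p(p-1) + (n-p)(l-2)`, because each full block
of `l-1` vertices contributes `(l-1)(l-2)` and the remainder `r < l-1` at most `r(l-2)`.
Let `s`, `S` be the halves of `k₁+k_m` and `k₁+k₂+k_m` and `p = min n₂ (k₂+k_m-1)`. Then twice
the right-hand side minus the resulting bound for twice the left-hand side is
`2(S-s)(n₁-2s) + (S-s)(3s-S+1) + (n₂-p)(2S-k_m) + p(2S-1-p)`: every term is non-negative, and
the second is positive because `3 ≤ k₂ ≤ k₁`.
-/

lemma two_mul_choose_two_add_self (n : ℕ) : 2 * n.choose 2 + n = n * n := by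
  induction n with
  | zero => rfl
  | succ n ih =>
    rw [Nat.choose_succ_succ', Nat.choose_one_right]
    linarith

lemma two_mul_choose_two_le {r l : ℕ} (h : r < l) : 2 * r.choose 2 ≤ r * (l - 2) := by
  have hsq := two_mul_choose_two_add_self r
  have hle : r * r ≤ r * (l - 2) + r := by
    rw [← Nat.mul_succ]
    exact Nat.mul_le_mul_left r (by omega)
  omega

lemma two_mul_brkt2 {n m : ℕ} (hm : 2 ≤ m) (hn : m / 2 ≤ n) :
    2 * (brkt2 n m : ℤ) = ((m / 2 : ℕ) - 1 : ℤ) * (2 * n - (m / 2 : ℕ)) := by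
  have hslope : (m - 2) / 2 = m / 2 - 1 := by omega
  have hs : 1 ≤ m / 2 := by omega
  unfold brkt2
  rw [hslope]
  generalize m / 2 = s at hs hn ⊢
  have hchoose := two_mul_choose_two_add_self (s - 1)
  zify [hs, hn] at hchoose ⊢
  linear_combination hchoose

lemma two_mul_brkt3_add_le (n m : ℕ) {l : ℕ} (hl : 2 ≤ l) :
    2 * brkt3 n m l + min n (m - 1) ≤
      min n (m - 1) * min n (m - 1) + (n - min n (m - 1)) * (l - 2) := by
  unfold brkt3
  split_ifs with h
  · rw [min_eq_left h, two_mul_choose_two_add_self, Nat.sub_self, zero_mul, add_zero]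
  · rw [min_eq_right (by omega)]
    set d := n - (m - 1)
    have hrem : 2 * (d % (l - 1)).choose 2 ≤ d % (l - 1) * (l - 2) :=
      two_mul_choose_two_le ((Nat.mod_lt _ (by omega)).trans (by omega))
    have hd : (l - 1) * (d / (l - 1)) + d % (l - 1) = d := Nat.div_add_mod d (l - 1)
    have hsq := two_mul_choose_two_add_self (m - 1)
    have hblocks : 2 * (d / (l - 1) * (l - 1).choose 2) ≤ d / (l - 1) * ((l - 1) * (l - 2)) := by
      rw [mul_left_comm]
      exact Nat.mul_le_mul_left _ (two_mul_choose_two_le (by omega))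
    have hsplit : d * (l - 2) = d / (l - 1) * ((l - 1) * (l - 2)) + d % (l - 1) * (l - 2) := by
      conv_lhs => rw [← hd]
      ring
    linarith

lemma doubled_gap_pos {s S n₁ n₂ p l : ℤ} (hsS : s < S) (hS : S ≤ 3 * s) (hn₁ : 2 * s ≤ n₁)
    (hp₀ : 0 ≤ p) (hpS : p ≤ 2 * S - 1) (hpn : p ≤ n₂) (hl : l ≤ 2 * S) :
    (s - 1) * (2 * n₁ - s) + (p * p - p + (n₂ - p) * (l - 2)) <
      (S - 1) * (2 * (n₁ + n₂) - S) := by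
  linarith [mul_nonneg (sub_nonneg.2 hsS.le) (sub_nonneg.2 hn₁),
    mul_pos (sub_pos.2 hsS) (by linarith : 0 < 3 * s - S + 1),
    mul_nonneg (sub_nonneg.2 hpn) (sub_nonneg.2 hl),
    mul_nonneg hp₀ (sub_nonneg.2 hpS)]

theorem statement18_general (k1 k2 km n1 n2 : ℕ) (h12 : k2 ≤ k1) (h2m : km ≤ k2) (h3 : 3 ≤ km)
    (hn1 : k1 + km ≤ n1) :
    brkt2 n1 (k1 + km) + brkt3 n2 (k2 + km) km < brkt2 (n1 + n2) (k1 + k2 + km) := by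
  have hsmall := two_mul_brkt2 (n := n1) (m := k1 + km) (by omega) (by omega)
  have hlarge := two_mul_brkt2 (n := n1 + n2) (m := k1 + k2 + km) (by omega) (by omega)
  have hpaths := two_mul_brkt3_add_le n2 (k2 + km) (l := km) (by omega)
  set p := min n2 (k2 + km - 1)
  have hpn : p ≤ n2 := min_le_left _ _
  zify [hpn, show 2 ≤ km by omega] at hpaths
  have hgap := doubled_gap_pos (s := ((k1 + km) / 2 : ℕ)) (S := ((k1 + k2 + km) / 2 : ℕ))
    (n₁ := n1) (n₂ := n2) (p := p) (l := km) (by omega) (by omega) (by omega) (by omega)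
    (by omega) (by omega) (by omega)
  rw [Nat.cast_add n1 n2] at hlarge
  zify
  linarith

theorem statement18 (k1 k2 km n1 n2 : ℕ) (h12 : k2 ≤ k1) (h2m : km ≤ k2) (h3 : 3 ≤ km)
    (hodd : (if Odd k1 then 1 else 0) + (if Odd k2 then 1 else 0) +
        (if Odd km then 1 else 0) ≤ 1)
    (hn1 : k1 + km ≤ n1) (hn2 : k2 ≤ n2) :
    brkt2 n1 (k1 + km) + brkt3 n2 (k2 + km) km < brkt2 (n1 + n2) (k1 + k2 + km) :=
  statement18_general k1 k2 km n1 n2 h12 h2m h3 hn1
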